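/- Let c_1, …, c_{2n} ∈ K(f) be distinct elements such that F_j(c_k) ≠ 0 for all j, k, and set h_{j,k}(t) := F'_j(c_k)/F_j(c_k) ∈ K(t), where F'_j denotes the derivative of F_j with respect to x. If (e_1, …, e_r) ∈ {0,1}^r is such that ∑_{j=1}^r e_j · h_{j,k}(t) ∈ L_i for every k = 1, …, 2n, then the polynomial ∏_{j=1}^r F_j^{e_j} has all its coefficients in L_i, i.e., ∏_{j=1}^r F_j^{e_j} ∈ L_i[x]. -/

import Mathlib

open Polynomial

/-- `Φ_g(x) := g_n(x) − g(t)·g_d(x) ∈ K(t)[x]`, where `g = g_n/g_d` with `g_n, g_d` coprime. -/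
noncomputable def Phi {K : Type*} [Field K] (g : RatFunc K) : Polynomial (RatFunc K) :=
  g.num.map (algebraMap K (RatFunc K)) - Polynomial.C g * (g.denom.map (algebraMap K (RatFunc K)))

/-- A rational function is nonconstant if it is not of the form `C c`. -/
def Nonconst {K : Type*} [Field K] (g : RatFunc K) : Prop := ∀ c : K, g ≠ RatFunc.C c

/-- The `i`-th principal subfield `L_i := { g ∈ K(t) : F_i ∣ Φ_g } ∪ K` as a set. -/
def Lset {K : Type*} [Field K] (F : Polynomial (RatFunc K)) : Set (RatFunc K) :=
  {g : RatFunc K | F ∣ Phi g ∨ ∃ c : K, g = RatFunc.C c}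

/-!
Fix a root `β` of `F_i` in an algebraic closure `Ω` of `K(t)`. As `Φ_f(β) = 0` and `f` is
nonconstant, `β` is transcendental over `K`, so `t ↦ β` defines a `K`-embedding `σ : K(t) → Ω`,
and `L_i` is exactly the set on which `σ` agrees with the inclusion `ι`; in particular `σ` fixes
`K(f)`, hence every `c_k`. The polynomial `P = ∏ F_j^{e_j}` is a monic separable divisor of `Φ_f`,
so it has degree at most `n`, and the hypothesis says that `σ` and `ι` agree on `P'(c_k)/P(c_k)`.
Hence the Wronskian of `P^σ` and `P^ι`, of degree `< 2n`, vanishes at the `2n` points `c_k`, so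
it is zero. Since `P^ι` is separable this gives `P^ι ∣ P^σ`, so `P^σ = P^ι`: every coefficient of
`P` is fixed by `σ`, i.e. lies in `L_i`.
-/

open scoped IntermediateField

namespace Polynomial

theorem eval_derivative_prod_pow_div {R ι : Type*} [Field R] (s : Finset ι) (p : ι → R[X])
    (e : ι → ℕ) (x : R) (hp : ∀ j ∈ s, (p j).eval x ≠ 0) :
    (derivative (∏ j ∈ s, p j ^ e j)).eval x / (∏ j ∈ s, p j ^ e j).eval x =
      ∑ j ∈ s, (e j : R) * ((derivative (p j)).eval x / (p j).eval x) := by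
  induction s using Finset.cons_induction with
  | empty => simp
  | cons a s _ ih =>
    have hpa := hp a (Finset.mem_cons_self a s)
    have hps : (∏ j ∈ s, p j ^ e j).eval x ≠ 0 := by
      rw [eval_prod]
      exact Finset.prod_ne_zero_iff.mpr fun j hj => by
        rw [eval_pow]; exact pow_ne_zero _ (hp j (Finset.mem_cons_of_mem hj))
    rw [Finset.prod_cons, Finset.sum_cons, ← ih fun j hj => hp j (Finset.mem_cons_of_mem hj),
      derivative_mul, derivative_pow]
    simp only [eval_add, eval_mul, eval_pow, eval_C]
    rcases Nat.eq_zero_or_pos (e a) with h0 | hpos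
    · simp [h0]
    · rw [← Nat.sub_add_cancel hpos, pow_succ]
      field_simp
      push_cast
      ring

theorem Monic.eq_of_wronskian_eq_zero {R : Type*} [Field R] {a b : R[X]} (ha : a.Monic)
    (hb : b.Monic) (hsep : a.Separable) (hdeg : b.natDegree ≤ a.natDegree)
    (hw : wronskian a b = 0) : b = a := by
  have hdvd : a ∣ derivative a * b := ⟨derivative b, (sub_eq_zero.mp hw).symm⟩
  exact eq_of_monic_of_dvd_of_natDegree_le ha hb (hsep.dvd_of_dvd_mul_left hdvd) hdeg

theorem wronskian_eq_zero_of_eval_eq_zero {R ι : Type*} [CommRing R] [IsDomain R] [Fintype ι]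
    {a b : R[X]} {x : ι → R} (hx : Function.Injective x)
    (hcard : a.natDegree + b.natDegree ≤ Fintype.card ι)
    (hroot : ∀ k, (wronskian a b).eval (x k) = 0) : wronskian a b = 0 := by
  by_contra hw
  exact hw (eq_zero_of_natDegree_lt_card_of_eval_eq_zero _ hx hroot
    ((natDegree_wronskian_lt_add hw).trans_le hcard))

theorem eval_wronskian_map_map_eq_zero {L Ω : Type*} [Field L] [CommRing Ω] (τ₁ τ₂ : L →+* Ω)
    (p : L[X]) {x : L} (hx : τ₁ x = τ₂ x) (hp : p.eval x ≠ 0)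
    (hlog : τ₁ ((derivative p).eval x / p.eval x) = τ₂ ((derivative p).eval x / p.eval x)) :
    (wronskian (p.map τ₁) (p.map τ₂)).eval (τ₁ x) = 0 := by
  have hp' : (derivative p).eval x = p.eval x * ((derivative p).eval x / p.eval x) := by
    rw [mul_div_cancel₀ _ hp]
  rw [wronskian, eval_sub, eval_mul, eval_mul, derivative_map, derivative_map, eval_map_apply,
    eval_map_apply, hx, eval_map_apply, eval_map_apply, hp', map_mul, map_mul, hlog]
  ring

theorem map_eq_map_of_logDeriv_eq {L Ω ι : Type*} [Field L] [Field Ω] [Fintype ι]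
    (τ₁ τ₂ : L →+* Ω) {p : L[X]} (hp : p.Monic) (hsep : p.Separable) {x : ι → L}
    (hx : Function.Injective x) (hcard : 2 * p.natDegree ≤ Fintype.card ι)
    (hτx : ∀ k, τ₁ (x k) = τ₂ (x k)) (hpx : ∀ k, p.eval (x k) ≠ 0)
    (hlog : ∀ k, τ₁ ((derivative p).eval (x k) / p.eval (x k)) =
      τ₂ ((derivative p).eval (x k) / p.eval (x k))) :
    p.map τ₁ = p.map τ₂ := by
  refine ((hp.map τ₁).eq_of_wronskian_eq_zero (hp.map τ₂) hsep.map
    (by rw [natDegree_map, natDegree_map]) ?_).symm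
  refine wronskian_eq_zero_of_eval_eq_zero (τ₁.injective.comp hx) ?_
    fun k => eval_wronskian_map_map_eq_zero τ₁ τ₂ p (hτx k) (hpx k) (hlog k)
  rw [natDegree_map, natDegree_map]
  omega

end Polynomial

theorem natDegree_Phi_le {K : Type*} [Field K] (g : RatFunc K) :
    (Phi g).natDegree ≤ max g.num.natDegree g.denom.natDegree :=
  (natDegree_sub_le _ _).trans <| max_le_max natDegree_map_le <|
    (natDegree_C_mul_le _ _).trans natDegree_map_le

theorem IntermediateField.eq_on_adjoin_simple {F E L : Type*} [Field F] [Field E] [Algebra F E]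
    [Semiring L] [Algebra F L] {φ₁ φ₂ : E →ₐ[F] L} {x y : E} (hx : φ₁ x = φ₂ x)
    (hy : y ∈ F⟮x⟯) : φ₁ y = φ₂ y := by
  have : φ₁.comp F⟮x⟯.val = φ₂.comp F⟮x⟯.val :=
    IntermediateField.adjoin_algHom_ext F fun z hz => by
      obtain rfl := Set.mem_singleton_iff.mp hz; exact hx
  exact congr($this ⟨y, hy⟩)

section Embedding

variable {K Ω : Type*} [Field K] [Field Ω] [Algebra (RatFunc K) Ω] [Algebra K Ω]
  [IsScalarTower K (RatFunc K) Ω]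

theorem aeval_Phi (β : Ω) (g : RatFunc K) :
    aeval β (Phi g) = aeval β g.num - algebraMap (RatFunc K) Ω g * aeval β g.denom := by
  rw [Phi, map_sub, map_mul, aeval_C, aeval_map_algebraMap, aeval_map_algebraMap]

theorem aeval_denom_ne_zero_of_aeval_Phi_eq_zero {β : Ω} {g : RatFunc K}
    (hβ : aeval β (Phi g) = 0) : aeval β g.denom ≠ 0 := by
  intro hd
  rw [aeval_Phi, hd, mul_zero, sub_zero] at hβ
  obtain ⟨a, b, hab⟩ := RatFunc.isCoprime_num_denom g
  simpa [hβ, hd] using congr(aeval β $hab)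

theorem transcendental_of_aeval_Phi_eq_zero {f : RatFunc K} (hf : Nonconst f) {β : Ω}
    (hβ : aeval β (Phi f) = 0) : Transcendental K β := by
  intro hβalg
  have hd := aeval_denom_ne_zero_of_aeval_Phi_eq_zero hβ
  have hmem : algebraMap (RatFunc K) Ω f ∈ K⟮β⟯ := by
    rw [IntermediateField.mem_adjoin_simple_iff]
    refine ⟨f.num, f.denom, (div_eq_of_eq_mul hd ?_).symm⟩
    rw [aeval_Phi] at hβ
    exact sub_eq_zero.mp hβ
  have : IsAlgebraic K (algebraMap (RatFunc K) Ω f) := by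
    have := IntermediateField.isAlgebraic_adjoin_simple hβalg.isIntegral
    exact IntermediateField.isAlgebraic_iff.mp (Algebra.IsAlgebraic.isAlgebraic ⟨_, hmem⟩)
  refine f.transcendental_of_ne_C (fun ⟨c, hc⟩ => hf c hc) ?_
  exact (isAlgebraic_algHom_iff (IsScalarTower.toAlgHom K (RatFunc K) Ω)
    (algebraMap (RatFunc K) Ω).injective).mp this

noncomputable def RatFunc.aevalOfTranscendental {β : Ω} (hβ : Transcendental K β) :
    RatFunc K →ₐ[K] Ω :=
  RatFunc.liftAlgHom (aeval β)
    (nonZeroDivisors_le_comap_nonZeroDivisors_of_injective _ (transcendental_iff_injective.mp hβ))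

theorem aeval_Phi_eq_mul {β : Ω} (hβ : Transcendental K β) (g : RatFunc K) :
    aeval β (Phi g) = (RatFunc.aevalOfTranscendental hβ g - algebraMap (RatFunc K) Ω g) *
      aeval β g.denom := by
  rw [aeval_Phi, RatFunc.aevalOfTranscendental, RatFunc.liftAlgHom_apply, sub_mul,
    div_mul_cancel₀ _ fun h => hβ ⟨_, g.denom_ne_zero, h⟩]

theorem mem_Lset_iff {β : Ω} (hβ : Transcendental K β) (g : RatFunc K) :
    g ∈ Lset (minpoly (RatFunc K) β) ↔
      RatFunc.aevalOfTranscendental hβ g = IsScalarTower.toAlgHom K (RatFunc K) Ω g := by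
  have hd : aeval β g.denom ≠ 0 := fun h => hβ ⟨_, g.denom_ne_zero, h⟩
  rw [IsScalarTower.coe_toAlgHom', ← sub_eq_zero, ← mul_left_inj' hd, zero_mul,
    ← aeval_Phi_eq_mul, ← minpoly.dvd_iff]
  refine ⟨?_, Or.inl⟩
  rintro (h | ⟨c, rfl⟩)
  · exact h
  · simp [Phi]

end Embedding

theorem stmt_12_general {K : Type*} [Field K] (f : RatFunc K) (hf : Nonconst f)
    (hmonic : (Phi f).Monic) (hsep : (Phi f).Separable)
    (r : ℕ) (F : Fin r → Polynomial (RatFunc K))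
    (hFm : ∀ j, (F j).Monic) (hFirr : ∀ j, Irreducible (F j))
    (hfact : Phi f = ∏ j, F j)
    (n : ℕ) (hn : n = max f.num.natDegree f.denom.natDegree)
    (c : Fin (2 * n) → RatFunc K)
    (hcmem : ∀ k, c k ∈ IntermediateField.adjoin K {f})
    (hcinj : Function.Injective c)
    (hcne : ∀ j k, (F j).eval (c k) ≠ 0)
    (i : Fin r) (e : Fin r → ℕ) (he : ∀ j, e j = 0 ∨ e j = 1)
    (hsum : ∀ k, (∑ j, (e j : RatFunc K) *
        ((Polynomial.derivative (F j)).eval (c k) / (F j).eval (c k))) ∈ Lset (F i)) :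
    ∀ m, (∏ j, (F j) ^ (e j)).coeff m ∈ Lset (F i) := by
  obtain ⟨β, hβ⟩ := IsAlgClosed.exists_aeval_eq_zero (AlgebraicClosure (RatFunc K)) (F i)
    (degree_pos_of_irreducible (hFirr i)).ne'
  have hmin : minpoly (RatFunc K) β = F i :=
    (minpoly.eq_of_irreducible_of_monic (hFirr i) hβ (hFm i)).symm
  have hFi : F i ∣ Phi f := hfact ▸ Finset.dvd_prod_of_mem F (Finset.mem_univ i)
  have hβtr : Transcendental K β :=
    transcendental_of_aeval_Phi_eq_zero hf (minpoly.dvd_iff.mp (hmin ▸ hFi))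
  set σ := RatFunc.aevalOfTranscendental hβtr
  set ι := IsScalarTower.toAlgHom K (RatFunc K) (AlgebraicClosure (RatFunc K))
  have hL : ∀ g, g ∈ Lset (F i) ↔ σ g = ι g := hmin ▸ mem_Lset_iff hβtr
  have hfix : ∀ k, σ (c k) = ι (c k) :=
    fun k => IntermediateField.eq_on_adjoin_simple ((hL f).mp (Or.inl hFi)) (hcmem k)
  set P := ∏ j, F j ^ e j
  have hPdvd : P ∣ Phi f := hfact ▸ Finset.prod_dvd_prod_of_dvd _ _ fun j _ =>
    (pow_dvd_pow (F j) (by rcases he j with h | h <;> simp [h])).trans (pow_one (F j)).dvd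
  have hPc : ∀ k, P.eval (c k) ≠ 0 := fun k => by
    rw [eval_prod]
    exact Finset.prod_ne_zero_iff.mpr fun j _ => by rw [eval_pow]; exact pow_ne_zero _ (hcne j k)
  have hPlog : ∀ k, (derivative P).eval (c k) / P.eval (c k) =
      ∑ j, (e j : RatFunc K) * ((derivative (F j)).eval (c k) / (F j).eval (c k)) :=
    fun k => eval_derivative_prod_pow_div _ F e (c k) fun j _ => hcne j k
  have hPdeg : P.natDegree ≤ n :=
    (natDegree_le_of_dvd hPdvd hmonic.ne_zero).trans (hn ▸ natDegree_Phi_le f)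
  have hmap : P.map σ.toRingHom = P.map ι.toRingHom :=
    map_eq_map_of_logDeriv_eq _ _ (monic_prod_of_monic _ _ fun j _ => (hFm j).pow _)
      (hsep.of_dvd hPdvd) hcinj (by simpa using hPdeg) hfix hPc
      fun k => by rw [hPlog]; exact (hL _).mp (hsum k)
  intro m
  rw [hL]
  simpa using congr(coeff $hmap m)

/-- Let `c_1, …, c_{2n} ∈ K(f)` be distinct with `F_j(c_k) ≠ 0`, and set
`h_{j,k} := F_j'(c_k)/F_j(c_k)`.  If `(e_1,…,e_r) ∈ {0,1}^r` is such that
`∑_j e_j h_{j,k} ∈ L_i` for all `k = 1, …, 2n`, then `∏_j F_j^{e_j} ∈ L_i[x]`. -/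
theorem stmt_12 {K : Type*} [Field K] (f : RatFunc K) (hf : Nonconst f)
    (hmonic : (Phi f).Monic) (hsep : (Phi f).Separable)
    (r : ℕ) (hr : 0 < r) (F : Fin r → Polynomial (RatFunc K))
    (hFm : ∀ j, (F j).Monic) (hFirr : ∀ j, Irreducible (F j))
    (hfact : Phi f = ∏ j, F j)
    (hF1 : F ⟨0, hr⟩ = Polynomial.X - Polynomial.C RatFunc.X)
    (n : ℕ) (hn : n = max f.num.natDegree f.denom.natDegree)
    (c : Fin (2 * n) → RatFunc K)
    (hcmem : ∀ k, c k ∈ IntermediateField.adjoin K {f})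
    (hcinj : Function.Injective c)
    (hcne : ∀ j k, (F j).eval (c k) ≠ 0)
    (i : Fin r) (e : Fin r → ℕ) (he : ∀ j, e j = 0 ∨ e j = 1)
    (hsum : ∀ k, (∑ j, (e j : RatFunc K) *
        ((Polynomial.derivative (F j)).eval (c k) / (F j).eval (c k))) ∈ Lset (F i)) :
    ∀ m, (∏ j, (F j) ^ (e j)).coeff m ∈ Lset (F i) :=
  stmt_12_general f hf hmonic hsep r F hFm hFirr hfact n hn c hcmem hcinj hcne i e he hsum
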